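/- Potential shaping shifts the soft Q-function by the potential: if R₂ is produced by potential shaping of R₁ with potential Φ, then the soft Q-functions satisfy Q₂^H(s,a) = Q₁^H(s,a) − Φ(s) for all s, a, where each soft Q-function is the unique solution of its soft Bellman equation. -/

import Mathlib

/-! Shaping by `Φ` conjugates the soft Bellman operator by the shift `Q ↦ Q - Φ`: the soft value
commutes with constant shifts, so the shift of the next-state value cancels the `γ Φ(s')` term of
the shaped reward. Hence `Q₁ - Φ` is a fixed point of the shaped operator. Since log-sum-exp is
1-Lipschitz for the sup norm, the soft Bellman operator is a `γ`-contraction, so this fixed point is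
the unique one, `Q₂`. -/

open Finset Function

lemma abs_sum_mul_le_of_abs_le {ι : Type*} [Fintype ι] {w f : ι → ℝ} {M : ℝ}
    (hw0 : ∀ i, 0 ≤ w i) (hw1 : ∑ i, w i = 1) (hf : ∀ i, |f i| ≤ M) :
    |∑ i, w i * f i| ≤ M :=
  calc |∑ i, w i * f i| ≤ ∑ i, |w i * f i| := abs_sum_le_sum_abs _ _
    _ ≤ ∑ i, w i * M := sum_le_sum fun i _ => by
        rw [abs_mul, abs_of_nonneg (hw0 i)]
        exact mul_le_mul_of_nonneg_left (hf i) (hw0 i)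
    _ = M := by rw [← sum_mul, hw1, one_mul]

section SoftValue

variable {A : Type*} [Fintype A]

noncomputable def softValue (β : ℝ) (q : A → ℝ) : ℝ :=
  β⁻¹ * Real.log (∑ a, Real.exp (β * q a))

lemma softValue_add_const [Nonempty A] {β : ℝ} (hβ : β ≠ 0) (q : A → ℝ) (c : ℝ) :
    softValue β (fun a => q a + c) = softValue β q + c := by
  have hpos : 0 < ∑ a, Real.exp (β * q a) := sum_pos (fun a _ => Real.exp_pos _) univ_nonempty
  have hsum : ∑ a, Real.exp (β * (q a + c)) = (∑ a, Real.exp (β * q a)) * Real.exp (β * c) := by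
    rw [sum_mul]
    exact sum_congr rfl fun a _ => by rw [← Real.exp_add, mul_add]
  rw [softValue, softValue, hsum, Real.log_mul hpos.ne' (Real.exp_ne_zero _), Real.log_exp]
  field_simp

lemma softValue_mono {β : ℝ} (hβ : 0 < β) {q q' : A → ℝ} (h : q ≤ q') :
    softValue β q ≤ softValue β q' := by
  rcases isEmpty_or_nonempty A with hA | hA
  · rw [Subsingleton.elim q q']
  · refine mul_le_mul_of_nonneg_left (Real.log_le_log ?_ ?_) (inv_nonneg.2 hβ.le)
    · exact sum_pos (fun a _ => Real.exp_pos _) univ_nonempty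
    · exact sum_le_sum fun a _ => Real.exp_le_exp.2 (mul_le_mul_of_nonneg_left (h a) hβ.le)

lemma lipschitzWith_softValue {β : ℝ} (hβ : 0 < β) : LipschitzWith 1 (softValue (A := A) β) := by
  rcases isEmpty_or_nonempty A with hA | hA
  · exact LipschitzWith.of_le_add fun q q' => by
      rw [Subsingleton.elim q q']
      exact le_add_of_nonneg_right dist_nonneg
  · refine LipschitzWith.of_le_add fun q q' => ?_
    rw [← softValue_add_const hβ.ne']
    refine softValue_mono hβ fun a => ?_
    have h := (le_abs_self (q a - q' a)).trans (Real.dist_eq (q a) (q' a) ▸ dist_le_pi_dist q q' a)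
    linarith

end SoftValue

section SoftBellman

variable {S A : Type*} [Fintype S] [Fintype A] {τ : S → A → S → ℝ} {γ β : ℝ}

noncomputable def softBellman (τ : S → A → S → ℝ) (γ β : ℝ) (R : S → A → S → ℝ)
    (Q : S → A → ℝ) : S → A → ℝ :=
  fun s a => ∑ s', τ s a s' * (R s a s' + γ * softValue β (Q s'))

lemma isFixedPt_softBellman_iff {R : S → A → S → ℝ} {Q : S → A → ℝ} :
    IsFixedPt (softBellman τ γ β R) Q ↔ ∀ s a, Q s a = ∑ s', τ s a s' *
      (R s a s' + γ * (1 / β) * Real.log (∑ a', Real.exp (β * Q s' a'))) := by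
  simp only [IsFixedPt, funext_iff, softBellman, softValue, one_div, mul_assoc, eq_comm]

lemma softBellman_shaping [Nonempty A] (hβ : β ≠ 0) (hτ1 : ∀ s a, ∑ s', τ s a s' = 1)
    {R₁ R₂ : S → A → S → ℝ} {Φ : S → ℝ}
    (hshape : ∀ s a s', R₂ s a s' = R₁ s a s' + γ * Φ s' - Φ s) (Q : S → A → ℝ) :
    softBellman τ γ β R₂ (fun s a => Q s a - Φ s) =
      fun s a => softBellman τ γ β R₁ Q s a - Φ s := by
  funext s a
  simp only [softBellman, hshape, sub_eq_add_neg (Q _ _), softValue_add_const hβ]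
  have hterm : ∀ s', τ s a s' * (R₁ s a s' + γ * Φ s' - Φ s + γ * (softValue β (Q s') + -Φ s'))
      = τ s a s' * (R₁ s a s' + γ * softValue β (Q s')) - τ s a s' * Φ s := fun s' => by ring
  rw [sum_congr rfl fun s' _ => hterm s', sum_sub_distrib, ← sum_mul, hτ1, one_mul]

lemma dist_softBellman_le (hγ : 0 ≤ γ) (hβ : 0 < β) (hτ0 : ∀ s a s', 0 ≤ τ s a s')
    (hτ1 : ∀ s a, ∑ s', τ s a s' = 1) (R : S → A → S → ℝ) (Q Q' : S → A → ℝ) :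
    dist (softBellman τ γ β R Q) (softBellman τ γ β R Q') ≤ γ * dist Q Q' := by
  have hr : 0 ≤ γ * dist Q Q' := mul_nonneg hγ dist_nonneg
  refine (dist_pi_le_iff hr).2 fun s => (dist_pi_le_iff hr).2 fun a => ?_
  have hdiff : softBellman τ γ β R Q s a - softBellman τ γ β R Q' s a
      = γ * ∑ s', τ s a s' * (softValue β (Q s') - softValue β (Q' s')) := by
    simp only [softBellman, ← sum_sub_distrib, mul_sum]
    exact sum_congr rfl fun s' _ => by ring
  rw [Real.dist_eq, hdiff, abs_mul, abs_of_nonneg hγ]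
  refine mul_le_mul_of_nonneg_left (abs_sum_mul_le_of_abs_le (hτ0 s a) (hτ1 s a) fun s' => ?_) hγ
  rw [← Real.dist_eq]
  calc dist (softValue β (Q s')) (softValue β (Q' s')) ≤ dist (Q s') (Q' s') := by
        simpa using (lipschitzWith_softValue hβ).dist_le_mul (Q s') (Q' s')
    _ ≤ dist Q Q' := dist_le_pi_dist Q Q' s'

lemma contractingWith_softBellman (hγ0 : 0 ≤ γ) (hγ1 : γ < 1) (hβ : 0 < β)
    (hτ0 : ∀ s a s', 0 ≤ τ s a s') (hτ1 : ∀ s a, ∑ s', τ s a s' = 1) (R : S → A → S → ℝ) :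
    ContractingWith ⟨γ, hγ0⟩ (softBellman τ γ β R) :=
  ⟨hγ1, LipschitzWith.of_dist_le_mul fun Q Q' => dist_softBellman_le hγ0 hβ hτ0 hτ1 R Q Q'⟩

end SoftBellman

/-- Potential shaping shifts the soft Q-function by the potential:
if `Q₁` and `Q₂` satisfy the soft Bellman equations for `R₁` and for the shaped
reward `R₂`, then `Q₂(s,a) = Q₁(s,a) − Φ(s)`. -/
theorem shaping_shifts_soft_Q {S A : Type*} [Fintype S] [Fintype A]
    (γ : ℝ) (hγ0 : 0 < γ) (hγ1 : γ < 1) (β : ℝ) (hβ : 0 < β)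
    (τ : S → A → S → ℝ) (hτ0 : ∀ s a s', 0 ≤ τ s a s')
    (hτ1 : ∀ s a, ∑ s', τ s a s' = 1)
    (R₁ R₂ : S → A → S → ℝ) (Φ : S → ℝ)
    (hshape : ∀ s a s', R₂ s a s' = R₁ s a s' + γ * Φ s' - Φ s)
    (Q₁ Q₂ : S → A → ℝ)
    (hQ₁ : ∀ s a, Q₁ s a = ∑ s', τ s a s' *
      (R₁ s a s' + γ * (1 / β) * Real.log (∑ a', Real.exp (β * Q₁ s' a'))))
    (hQ₂ : ∀ s a, Q₂ s a = ∑ s', τ s a s' *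
      (R₂ s a s' + γ * (1 / β) * Real.log (∑ a', Real.exp (β * Q₂ s' a')))) :
    ∀ s a, Q₂ s a = Q₁ s a - Φ s := by
  intro s a
  have : Nonempty A := ⟨a⟩
  have hfix₁ : IsFixedPt (softBellman τ γ β R₁) Q₁ := isFixedPt_softBellman_iff.2 hQ₁
  have hfix_shift : IsFixedPt (softBellman τ γ β R₂) (fun s a => Q₁ s a - Φ s) := by
    rw [IsFixedPt, softBellman_shaping hβ.ne' hτ1 hshape, hfix₁.eq]
  have hunique := (contractingWith_softBellman hγ0.le hγ1 hβ hτ0 hτ1 R₂).fixedPoint_unique'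
    (isFixedPt_softBellman_iff.2 hQ₂) hfix_shift
  exact congrFun₂ hunique s a
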